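/- arXiv:2206.14012 — 4 statements merged into one kernel-verified Lean document; each statement's English description precedes it below -/
import Mathlib

section
/- Suppose Φ ∈ ℝ⁴ satisfies a(Φ) > 0, b(Φ) > 0 and a(Φ)b(Φ) ≥ c(Φ)². Then λ1, λ2, λ3, λ4 are real and A(Φ) rᵢ(Φ) = λᵢ(Φ) rᵢ(Φ) for each i = 1,2,3,4; that is, the vectors rᵢ(Φ) are (right) eigenvectors of A(Φ) with eigenvalues λᵢ(Φ). -/
noncomputable section

open Real Matrix Set

namespace ElasticIP

/-- Euclidean norm on `ℝ⁴` (presented as `Fin 4 → ℝ`). -/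
def eucNorm4 (Φ : Fin 4 → ℝ) : ℝ := Real.sqrt (∑ i, (Φ i) ^ 2)

/-- `a(Φ) = c₁² + 2σ₀φ₁`. -/
def aF (c1 σ0 : ℝ) (Φ : Fin 4 → ℝ) : ℝ := c1 ^ 2 + 2 * σ0 * Φ 0

/-- `b(Φ) = c₂² + 2σ₁φ₁`. -/
def bF (c2 σ1 : ℝ) (Φ : Fin 4 → ℝ) : ℝ := c2 ^ 2 + 2 * σ1 * Φ 0

/-- `c(Φ) = 2σ₁φ₂`. -/
def cF (σ1 : ℝ) (Φ : Fin 4 → ℝ) : ℝ := 2 * σ1 * Φ 1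

/-- `Δ = (a-b)² + 4c²`. -/
def ΔF (c1 c2 σ0 σ1 : ℝ) (Φ : Fin 4 → ℝ) : ℝ :=
  (aF c1 σ0 Φ - bF c2 σ1 Φ) ^ 2 + 4 * cF σ1 Φ ^ 2

/-- The coefficient matrix `A(Φ)` of the first-order system. -/
def AM (c1 c2 σ0 σ1 : ℝ) (Φ : Fin 4 → ℝ) : Matrix (Fin 4) (Fin 4) ℝ :=
  !![0, 0, -1, 0;
     0, 0, 0, -1;
     -aF c1 σ0 Φ, -cF σ1 Φ, 0, 0;
     -cF σ1 Φ, -bF c2 σ1 Φ, 0, 0]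

/-- `λ₁ = √(((a+b)+√Δ)/2)`. -/
def lam1 (c1 c2 σ0 σ1 : ℝ) (Φ : Fin 4 → ℝ) : ℝ :=
  Real.sqrt ((aF c1 σ0 Φ + bF c2 σ1 Φ + Real.sqrt (ΔF c1 c2 σ0 σ1 Φ)) / 2)

/-- `λ₂ = √(((a+b)-√Δ)/2)`. -/
def lam2 (c1 c2 σ0 σ1 : ℝ) (Φ : Fin 4 → ℝ) : ℝ :=
  Real.sqrt ((aF c1 σ0 Φ + bF c2 σ1 Φ - Real.sqrt (ΔF c1 c2 σ0 σ1 Φ)) / 2)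

/-- `λ₃ = -λ₂`. -/
def lam3 (c1 c2 σ0 σ1 : ℝ) (Φ : Fin 4 → ℝ) : ℝ := - lam2 c1 c2 σ0 σ1 Φ

/-- `λ₄ = -λ₁`. -/
def lam4 (c1 c2 σ0 σ1 : ℝ) (Φ : Fin 4 → ℝ) : ℝ := - lam1 c1 c2 σ0 σ1 Φ

/-- Right eigenvector `r₁`. -/
def r1 (c1 c2 σ0 σ1 : ℝ) (Φ : Fin 4 → ℝ) : Fin 4 → ℝ :=
  ![(lam1 c1 c2 σ0 σ1 Φ ^ 2 - bF c2 σ1 Φ) / (2 * σ1),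
    Φ 1,
    -(lam1 c1 c2 σ0 σ1 Φ * (lam1 c1 c2 σ0 σ1 Φ ^ 2 - bF c2 σ1 Φ)) / (2 * σ1),
    -(lam1 c1 c2 σ0 σ1 Φ) * Φ 1]

/-- Right eigenvector `r₂`. -/
def r2 (c1 c2 σ0 σ1 : ℝ) (Φ : Fin 4 → ℝ) : Fin 4 → ℝ :=
  ![(lam2 c1 c2 σ0 σ1 Φ ^ 2 - bF c2 σ1 Φ) / (2 * σ1),
    Φ 1,
    -(lam2 c1 c2 σ0 σ1 Φ * (lam2 c1 c2 σ0 σ1 Φ ^ 2 - bF c2 σ1 Φ)) / (2 * σ1),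
    -(lam2 c1 c2 σ0 σ1 Φ) * Φ 1]

/-- Right eigenvector `r₃`. -/
def r3 (c1 c2 σ0 σ1 : ℝ) (Φ : Fin 4 → ℝ) : Fin 4 → ℝ :=
  ![(lam2 c1 c2 σ0 σ1 Φ ^ 2 - bF c2 σ1 Φ) / (2 * σ1),
    Φ 1,
    lam2 c1 c2 σ0 σ1 Φ * (lam2 c1 c2 σ0 σ1 Φ ^ 2 - bF c2 σ1 Φ) / (2 * σ1),
    lam2 c1 c2 σ0 σ1 Φ * Φ 1]

/-- Right eigenvector `r₄`. -/
def r4 (c1 c2 σ0 σ1 : ℝ) (Φ : Fin 4 → ℝ) : Fin 4 → ℝ :=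
  ![(lam1 c1 c2 σ0 σ1 Φ ^ 2 - bF c2 σ1 Φ) / (2 * σ1),
    Φ 1,
    lam1 c1 c2 σ0 σ1 Φ * (lam1 c1 c2 σ0 σ1 Φ ^ 2 - bF c2 σ1 Φ) / (2 * σ1),
    lam1 c1 c2 σ0 σ1 Φ * Φ 1]

/-- `K = (Δ + (a-b)√Δ)/(4σ₁²)`. -/
def KF (c1 c2 σ0 σ1 : ℝ) (Φ : Fin 4 → ℝ) : ℝ :=
  (ΔF c1 c2 σ0 σ1 Φ + (aF c1 σ0 Φ - bF c2 σ1 Φ) * Real.sqrt (ΔF c1 c2 σ0 σ1 Φ)) / (4 * σ1 ^ 2)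

/-- `N = (Δ - (a-b)√Δ)/(4σ₁²)`. -/
def NF (c1 c2 σ0 σ1 : ℝ) (Φ : Fin 4 → ℝ) : ℝ :=
  (ΔF c1 c2 σ0 σ1 Φ - (aF c1 σ0 Φ - bF c2 σ1 Φ) * Real.sqrt (ΔF c1 c2 σ0 σ1 Φ)) / (4 * σ1 ^ 2)

/-- Left eigenvector `l₁`. -/
def l1 (c1 c2 σ0 σ1 : ℝ) (Φ : Fin 4 → ℝ) : Fin 4 → ℝ :=
  (KF c1 c2 σ0 σ1 Φ)⁻¹ •
    ![(lam1 c1 c2 σ0 σ1 Φ ^ 2 - bF c2 σ1 Φ) / (2 * σ1),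
      Φ 1,
      -((lam1 c1 c2 σ0 σ1 Φ ^ 2 - bF c2 σ1 Φ) / (2 * σ1 * lam1 c1 c2 σ0 σ1 Φ)),
      -(Φ 1 / lam1 c1 c2 σ0 σ1 Φ)]

/-- Left eigenvector `l₂`. -/
def l2 (c1 c2 σ0 σ1 : ℝ) (Φ : Fin 4 → ℝ) : Fin 4 → ℝ :=
  (NF c1 c2 σ0 σ1 Φ)⁻¹ •
    ![(lam2 c1 c2 σ0 σ1 Φ ^ 2 - bF c2 σ1 Φ) / (2 * σ1),
      Φ 1,
      -((lam2 c1 c2 σ0 σ1 Φ ^ 2 - bF c2 σ1 Φ) / (2 * σ1 * lam2 c1 c2 σ0 σ1 Φ)),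
      -(Φ 1 / lam2 c1 c2 σ0 σ1 Φ)]

/-- Left eigenvector `l₃`. -/
def l3 (c1 c2 σ0 σ1 : ℝ) (Φ : Fin 4 → ℝ) : Fin 4 → ℝ :=
  (NF c1 c2 σ0 σ1 Φ)⁻¹ •
    ![(lam2 c1 c2 σ0 σ1 Φ ^ 2 - bF c2 σ1 Φ) / (2 * σ1),
      Φ 1,
      (lam2 c1 c2 σ0 σ1 Φ ^ 2 - bF c2 σ1 Φ) / (2 * σ1 * lam2 c1 c2 σ0 σ1 Φ),
      Φ 1 / lam2 c1 c2 σ0 σ1 Φ]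

/-- Left eigenvector `l₄`. -/
def l4 (c1 c2 σ0 σ1 : ℝ) (Φ : Fin 4 → ℝ) : Fin 4 → ℝ :=
  (KF c1 c2 σ0 σ1 Φ)⁻¹ •
    ![(lam1 c1 c2 σ0 σ1 Φ ^ 2 - bF c2 σ1 Φ) / (2 * σ1),
      Φ 1,
      (lam1 c1 c2 σ0 σ1 Φ ^ 2 - bF c2 σ1 Φ) / (2 * σ1 * lam1 c1 c2 σ0 σ1 Φ),
      Φ 1 / lam1 c1 c2 σ0 σ1 Φ]

/-- Indexed eigenvalues `λᵢ`, `i = 1,…,4` realised as `i : Fin 4`. -/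
def lamI (c1 c2 σ0 σ1 : ℝ) (i : Fin 4) (Φ : Fin 4 → ℝ) : ℝ :=
  match i with
  | 0 => lam1 c1 c2 σ0 σ1 Φ
  | 1 => lam2 c1 c2 σ0 σ1 Φ
  | 2 => lam3 c1 c2 σ0 σ1 Φ
  | 3 => lam4 c1 c2 σ0 σ1 Φ

/-- Indexed right eigenvectors `rᵢ`. -/
def rI (c1 c2 σ0 σ1 : ℝ) (i : Fin 4) (Φ : Fin 4 → ℝ) : Fin 4 → ℝ :=
  match i with
  | 0 => r1 c1 c2 σ0 σ1 Φ
  | 1 => r2 c1 c2 σ0 σ1 Φ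
  | 2 => r3 c1 c2 σ0 σ1 Φ
  | 3 => r4 c1 c2 σ0 σ1 Φ

/-- Indexed left eigenvectors `lᵢ`. -/
def lI (c1 c2 σ0 σ1 : ℝ) (i : Fin 4) (Φ : Fin 4 → ℝ) : Fin 4 → ℝ :=
  match i with
  | 0 => l1 c1 c2 σ0 σ1 Φ
  | 1 => l2 c1 c2 σ0 σ1 Φ
  | 2 => l3 c1 c2 σ0 σ1 Φ
  | 3 => l4 c1 c2 σ0 σ1 Φ

/-- Jacobian matrix of a map `ℝ⁴ → ℝ⁴`. -/
def jac (f : (Fin 4 → ℝ) → (Fin 4 → ℝ)) (Φ : Fin 4 → ℝ) : Matrix (Fin 4) (Fin 4) ℝ :=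
  fun i j => fderiv ℝ (fun Ψ => f Ψ i) Φ (Pi.single j 1)

/-- `cⁱᵢₘ(Φ) = ∇λᵢ(Φ) · rₘ(Φ)`. -/
def cCo (c1 c2 σ0 σ1 : ℝ) (i m : Fin 4) (Φ : Fin 4 → ℝ) : ℝ :=
  fderiv ℝ (lamI c1 c2 σ0 σ1 i) Φ (rI c1 c2 σ0 σ1 m Φ)

/-- `γⁱᵢₘ(Φ) = -(λᵢ-λₘ) lᵢ · (Drᵢ rₘ - Drₘ rᵢ)`. -/
def gammaII (c1 c2 σ0 σ1 : ℝ) (i m : Fin 4) (Φ : Fin 4 → ℝ) : ℝ :=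
  -(lamI c1 c2 σ0 σ1 i Φ - lamI c1 c2 σ0 σ1 m Φ) *
    (lI c1 c2 σ0 σ1 i Φ ⬝ᵥ
      (jac (rI c1 c2 σ0 σ1 i) Φ *ᵥ rI c1 c2 σ0 σ1 m Φ -
        jac (rI c1 c2 σ0 σ1 m) Φ *ᵥ rI c1 c2 σ0 σ1 i Φ))

/-- `γⁱₖₘ(Φ) = -(λₖ-λₘ) lᵢ · (Drₖ rₘ)`. -/
def gammaKM (c1 c2 σ0 σ1 : ℝ) (i k m : Fin 4) (Φ : Fin 4 → ℝ) : ℝ :=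
  -(lamI c1 c2 σ0 σ1 k Φ - lamI c1 c2 σ0 σ1 m Φ) *
    (lI c1 c2 σ0 σ1 i Φ ⬝ᵥ (jac (rI c1 c2 σ0 σ1 k) Φ *ᵥ rI c1 c2 σ0 σ1 m Φ))


/-- Generic right-eigenvector computation. -/
lemma eig_gen (a b c σ1 φ2 l : ℝ) (hσ1 : σ1 ≠ 0) (hc : c = 2 * σ1 * φ2)
    (hq : (l ^ 2 - a) * (l ^ 2 - b) = c ^ 2) :
    (!![0, 0, -1, 0; 0, 0, 0, -1; -a, -c, 0, 0; -c, -b, 0, 0] : Matrix (Fin 4) (Fin 4) ℝ) *ᵥ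
      ![(l ^ 2 - b) / (2 * σ1), φ2, -(l * (l ^ 2 - b)) / (2 * σ1), -l * φ2]
    = l • ![(l ^ 2 - b) / (2 * σ1), φ2, -(l * (l ^ 2 - b)) / (2 * σ1), -l * φ2] := by
  funext i
  fin_cases i <;>
    simp [Matrix.mulVec, dotProduct, Fin.sum_univ_four]
  all_goals field_simp
  all_goals subst hc
  all_goals nlinarith [hq, sq_nonneg l, sq_nonneg σ1]

/-- Generic right-eigenvector computation (other sign). -/
lemma eig_gen' (a b c σ1 φ2 l : ℝ) (hσ1 : σ1 ≠ 0) (hc : c = 2 * σ1 * φ2)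
    (hq : (l ^ 2 - a) * (l ^ 2 - b) = c ^ 2) :
    (!![0, 0, -1, 0; 0, 0, 0, -1; -a, -c, 0, 0; -c, -b, 0, 0] : Matrix (Fin 4) (Fin 4) ℝ) *ᵥ
      ![(l ^ 2 - b) / (2 * σ1), φ2, l * (l ^ 2 - b) / (2 * σ1), l * φ2]
    = (-l) • ![(l ^ 2 - b) / (2 * σ1), φ2, l * (l ^ 2 - b) / (2 * σ1), l * φ2] := by
  funext i
  fin_cases i <;>
    simp [Matrix.mulVec, dotProduct, Fin.sum_univ_four]
  all_goals field_simp
  all_goals subst hc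
  all_goals nlinarith [hq, sq_nonneg l, sq_nonneg σ1]

/-- If `a(Φ) > 0`, `b(Φ) > 0` and `a(Φ)b(Φ) ≥ c(Φ)²`, then the `λᵢ` are real
(the arguments of the square roots are nonnegative) and `A(Φ) rᵢ(Φ) = λᵢ(Φ) rᵢ(Φ)`
for `i = 1,2,3,4`. -/
theorem right_eigenvectors (c1 c2 σ0 σ1 : ℝ) (hc2 : 0 < c2) (hc12 : c2 < c1) (hσ1 : σ1 ≠ 0)
    (Φ : Fin 4 → ℝ) (ha : 0 < aF c1 σ0 Φ) (hb : 0 < bF c2 σ1 Φ)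
    (habc : cF σ1 Φ ^ 2 ≤ aF c1 σ0 Φ * bF c2 σ1 Φ) :
    0 ≤ (aF c1 σ0 Φ + bF c2 σ1 Φ + Real.sqrt (ΔF c1 c2 σ0 σ1 Φ)) / 2 ∧
    0 ≤ (aF c1 σ0 Φ + bF c2 σ1 Φ - Real.sqrt (ΔF c1 c2 σ0 σ1 Φ)) / 2 ∧
    AM c1 c2 σ0 σ1 Φ *ᵥ r1 c1 c2 σ0 σ1 Φ = lam1 c1 c2 σ0 σ1 Φ • r1 c1 c2 σ0 σ1 Φ ∧
    AM c1 c2 σ0 σ1 Φ *ᵥ r2 c1 c2 σ0 σ1 Φ = lam2 c1 c2 σ0 σ1 Φ • r2 c1 c2 σ0 σ1 Φ ∧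
    AM c1 c2 σ0 σ1 Φ *ᵥ r3 c1 c2 σ0 σ1 Φ = lam3 c1 c2 σ0 σ1 Φ • r3 c1 c2 σ0 σ1 Φ ∧
    AM c1 c2 σ0 σ1 Φ *ᵥ r4 c1 c2 σ0 σ1 Φ = lam4 c1 c2 σ0 σ1 Φ • r4 c1 c2 σ0 σ1 Φ := by
  set a := aF c1 σ0 Φ with hadef
  set b := bF c2 σ1 Φ with hbdef
  set c := cF σ1 Φ with hcdef
  set Δ := ΔF c1 c2 σ0 σ1 Φ with hΔdef
  have hΔeq : Δ = (a - b) ^ 2 + 4 * c ^ 2 := rfl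
  have hΔ0 : 0 ≤ Δ := by rw [hΔeq]; positivity
  have ht : Real.sqrt Δ ^ 2 = Δ := Real.sq_sqrt hΔ0
  have ht0 : 0 ≤ Real.sqrt Δ := Real.sqrt_nonneg _
  have h1 : 0 ≤ (a + b + Real.sqrt Δ) / 2 := by linarith
  have hΔle : Real.sqrt Δ ≤ a + b := by
    rw [show a + b = Real.sqrt ((a + b) ^ 2) from (Real.sqrt_sq (by linarith)).symm]
    apply Real.sqrt_le_sqrt
    nlinarith [hΔeq]
  have h2 : 0 ≤ (a + b - Real.sqrt Δ) / 2 := by linarith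
  have hl1 : lam1 c1 c2 σ0 σ1 Φ ^ 2 = (a + b + Real.sqrt Δ) / 2 := Real.sq_sqrt h1
  have hl2 : lam2 c1 c2 σ0 σ1 Φ ^ 2 = (a + b - Real.sqrt Δ) / 2 := Real.sq_sqrt h2
  have hc : c = 2 * σ1 * Φ 1 := rfl
  have hq1 : (lam1 c1 c2 σ0 σ1 Φ ^ 2 - a) * (lam1 c1 c2 σ0 σ1 Φ ^ 2 - b) = c ^ 2 := by
    rw [hl1]; linear_combination ht / 4 + hΔeq / 4
  have hq2 : (lam2 c1 c2 σ0 σ1 Φ ^ 2 - a) * (lam2 c1 c2 σ0 σ1 Φ ^ 2 - b) = c ^ 2 := by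
    rw [hl2]; linear_combination ht / 4 + hΔeq / 4
  refine ⟨h1, h2, ?_, ?_, ?_, ?_⟩
  · exact eig_gen a b c σ1 (Φ 1) _ hσ1 hc hq1
  · exact eig_gen a b c σ1 (Φ 1) _ hσ1 hc hq2
  · exact eig_gen' a b c σ1 (Φ 1) _ hσ1 hc hq2
  · exact eig_gen' a b c σ1 (Φ 1) _ hσ1 hc hq1

end ElasticIP
end
end

section
/- There exists κ > 0, depending only on c1, c2, σ0, σ1, such that for every Φ ∈ ℝ⁴ with |Φ| < 2κ one has a(Φ) > b(Φ) > 0 and a(Φ)b(Φ) > c(Φ)², and the eigenvalues of A(Φ) are real, distinct and ordered: λ4(Φ) < λ3(Φ) < λ2(Φ) < λ1(Φ) (strict hyperbolicity). Moreover at Φ = 0 one has λ1(0) = c1 and λ2(0) = c2. -/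
/-
At `Φ = 0` one has `a = c₁² > b = c₂² > 0` and `c = 0`. These strict inequalities are open
conditions, so they hold on a ball around `0`, which gives `κ`. There `0 < √Δ < a + b`, because
`Δ - (a + b)² = 4(c² - ab)`; hence `λ₂ > 0` and `λ₂ < λ₁`. The characteristic polynomial of `A` is
`λ⁴ - (a + b)λ² + (ab - c²)`, a quadratic in `λ²` whose roots are `(a + b ± √Δ)/2 = λ₁², λ₂²`.
-/

noncomputable section

open Real Matrix Set

namespace ElasticIP

lemma det_smul_one_sub_wave_matrix (a b c l : ℝ) :
    det (l • (1 : Matrix (Fin 4) (Fin 4) ℝ) - !![0, 0, -1, 0; 0, 0, 0, -1; -a, -c, 0, 0; -c, -b, 0, 0]) =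
      l ^ 4 - (a + b) * l ^ 2 + (a * b - c ^ 2) := by
  have h : (2 : Fin 4).succAbove (2 : Fin 3) = 3 := by decide
  simp [det_succ_row_zero, one_apply, Fin.sum_univ_succ, h]
  ring

lemma quartic_eq_zero_of_sq_eq {a b c s l : ℝ} (hs : s ^ 2 = (a - b) ^ 2 + 4 * c ^ 2)
    (hl : l ^ 2 = (a + b + s) / 2) : l ^ 4 - (a + b) * l ^ 2 + (a * b - c ^ 2) = 0 := by
  linear_combination (l ^ 2 + (s - a - b) / 2) * hl + hs / 4

lemma sqrt_discr_pos {a b c : ℝ} (hab : b < a) : 0 < √((a - b) ^ 2 + 4 * c ^ 2) :=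
  Real.sqrt_pos.mpr (by nlinarith [sq_nonneg c])

lemma sqrt_discr_lt_add {a b c : ℝ} (hb : 0 < b) (hc : c ^ 2 < a * b) :
    √((a - b) ^ 2 + 4 * c ^ 2) < a + b := by
  have hab : 0 < a + b := by nlinarith [sq_nonneg c]
  rw [Real.sqrt_lt' hab]
  nlinarith

lemma abs_apply_le_eucNorm4 (Φ : Fin 4 → ℝ) (i : Fin 4) : |Φ i| ≤ eucNorm4 Φ := by
  rw [eucNorm4, ← Real.sqrt_sq_eq_abs]
  exact Real.sqrt_le_sqrt <|
    Finset.single_le_sum (f := fun j => Φ j ^ 2) (fun j _ => sq_nonneg _) (Finset.mem_univ i)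

lemma norm_le_eucNorm4 (Φ : Fin 4 → ℝ) : ‖Φ‖ ≤ eucNorm4 Φ :=
  (pi_norm_le_iff_of_nonneg (Real.sqrt_nonneg _)).mpr fun i =>
    (Real.norm_eq_abs _).trans_le (abs_apply_le_eucNorm4 Φ i)

def hyperbolicSet (c1 c2 σ0 σ1 : ℝ) : Set (Fin 4 → ℝ) :=
  {Φ | bF c2 σ1 Φ < aF c1 σ0 Φ ∧ 0 < bF c2 σ1 Φ ∧ cF σ1 Φ ^ 2 < aF c1 σ0 Φ * bF c2 σ1 Φ}

section HyperbolicSet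

variable {c1 c2 σ0 σ1 : ℝ}

lemma isOpen_hyperbolicSet : IsOpen (hyperbolicSet c1 c2 σ0 σ1) := by
  have ha : Continuous (aF c1 σ0) := by unfold aF; fun_prop
  have hb : Continuous (bF c2 σ1) := by unfold bF; fun_prop
  have hc : Continuous (cF σ1) := by unfold cF; fun_prop
  exact (isOpen_lt hb ha).inter ((isOpen_lt continuous_const hb).inter
    (isOpen_lt (hc.pow 2) (ha.mul hb)))

lemma zero_mem_hyperbolicSet (hc2 : 0 < c2) (hc12 : c2 < c1) :
    (0 : Fin 4 → ℝ) ∈ hyperbolicSet c1 c2 σ0 σ1 := by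
  refine ⟨?_, ?_, ?_⟩ <;> simp only [aF, bF, cF, Pi.zero_apply, mul_zero, add_zero]
  · nlinarith
  · positivity
  · simpa using mul_pos (pow_pos (hc2.trans hc12) 2) (pow_pos hc2 2)

lemma exists_eucNorm4_lt_subset_hyperbolicSet (hc2 : 0 < c2) (hc12 : c2 < c1) :
    ∃ κ > (0 : ℝ), ∀ Φ, eucNorm4 Φ < 2 * κ → Φ ∈ hyperbolicSet c1 c2 σ0 σ1 := by
  obtain ⟨ε, hε, hball⟩ := Metric.isOpen_iff.mp isOpen_hyperbolicSet 0
    (zero_mem_hyperbolicSet (σ0 := σ0) (σ1 := σ1) hc2 hc12)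
  refine ⟨ε / 2, half_pos hε, fun Φ hΦ => hball ?_⟩
  rw [mem_ball_zero_iff]
  linarith [norm_le_eucNorm4 Φ]

variable {Φ : Fin 4 → ℝ}

lemma sqrt_ΔF_pos (h : Φ ∈ hyperbolicSet c1 c2 σ0 σ1) : 0 < √(ΔF c1 c2 σ0 σ1 Φ) :=
  sqrt_discr_pos h.1

lemma sqrt_ΔF_lt (h : Φ ∈ hyperbolicSet c1 c2 σ0 σ1) :
    √(ΔF c1 c2 σ0 σ1 Φ) < aF c1 σ0 Φ + bF c2 σ1 Φ :=
  sqrt_discr_lt_add h.2.1 h.2.2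

lemma lam2_pos (h : Φ ∈ hyperbolicSet c1 c2 σ0 σ1) : 0 < lam2 c1 c2 σ0 σ1 Φ :=
  Real.sqrt_pos.mpr (by linarith [sqrt_ΔF_lt h])

lemma lam2_lt_lam1 (h : Φ ∈ hyperbolicSet c1 c2 σ0 σ1) :
    lam2 c1 c2 σ0 σ1 Φ < lam1 c1 c2 σ0 σ1 Φ :=
  Real.sqrt_lt_sqrt (by linarith [sqrt_ΔF_lt h]) (by linarith [sqrt_ΔF_pos h])

lemma det_lamI_smul_one_sub_AM (h : Φ ∈ hyperbolicSet c1 c2 σ0 σ1) (i : Fin 4) :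
    det (lamI c1 c2 σ0 σ1 i Φ • (1 : Matrix (Fin 4) (Fin 4) ℝ) - AM c1 c2 σ0 σ1 Φ) = 0 := by
  set d := √(ΔF c1 c2 σ0 σ1 Φ)
  have hd := sqrt_ΔF_lt h
  have hs : d ^ 2 = (aF c1 σ0 Φ - bF c2 σ1 Φ) ^ 2 + 4 * cF σ1 Φ ^ 2 :=
    Real.sq_sqrt (by unfold ΔF; positivity)
  have hsq1 : lam1 c1 c2 σ0 σ1 Φ ^ 2 = (aF c1 σ0 Φ + bF c2 σ1 Φ + d) / 2 :=
    Real.sq_sqrt (by linarith [Real.sqrt_nonneg (ΔF c1 c2 σ0 σ1 Φ)])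
  have hsq2 : lam2 c1 c2 σ0 σ1 Φ ^ 2 = (aF c1 σ0 Φ + bF c2 σ1 Φ + -d) / 2 :=
    (Real.sq_sqrt (by linarith)).trans (by ring)
  have hs' : (-d) ^ 2 = _ := (neg_sq d).trans hs
  rw [AM, det_smul_one_sub_wave_matrix]
  fin_cases i
  · exact quartic_eq_zero_of_sq_eq hs hsq1
  · exact quartic_eq_zero_of_sq_eq hs' hsq2
  · exact quartic_eq_zero_of_sq_eq hs' ((neg_sq _).trans hsq2)
  · exact quartic_eq_zero_of_sq_eq hs ((neg_sq _).trans hsq1)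

end HyperbolicSet

lemma ΔF_zero (c1 c2 σ0 σ1 : ℝ) : ΔF c1 c2 σ0 σ1 0 = (c1 ^ 2 - c2 ^ 2) ^ 2 := by
  simp [ΔF, aF, bF, cF]

lemma lam1_zero {c1 c2 σ0 σ1 : ℝ} (hc1 : 0 ≤ c1) (h : c2 ^ 2 ≤ c1 ^ 2) :
    lam1 c1 c2 σ0 σ1 0 = c1 := by
  rw [lam1, ΔF_zero, Real.sqrt_sq (sub_nonneg.mpr h)]
  simp only [aF, bF, Pi.zero_apply, mul_zero, add_zero]
  rw [show (c1 ^ 2 + c2 ^ 2 + (c1 ^ 2 - c2 ^ 2)) / 2 = c1 ^ 2 by ring, Real.sqrt_sq hc1]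

lemma lam2_zero {c1 c2 σ0 σ1 : ℝ} (hc2 : 0 ≤ c2) (h : c2 ^ 2 ≤ c1 ^ 2) :
    lam2 c1 c2 σ0 σ1 0 = c2 := by
  rw [lam2, ΔF_zero, Real.sqrt_sq (sub_nonneg.mpr h)]
  simp only [aF, bF, Pi.zero_apply, mul_zero, add_zero]
  rw [show (c1 ^ 2 + c2 ^ 2 - (c1 ^ 2 - c2 ^ 2)) / 2 = c2 ^ 2 by ring, Real.sqrt_sq hc2]

theorem strict_hyperbolicity_general (c1 c2 σ0 σ1 : ℝ) (hc2 : 0 < c2) (hc12 : c2 < c1) :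
    ∃ κ > (0:ℝ),
      (∀ Φ : Fin 4 → ℝ, eucNorm4 Φ < 2 * κ →
        bF c2 σ1 Φ < aF c1 σ0 Φ ∧ 0 < bF c2 σ1 Φ ∧
        cF σ1 Φ ^ 2 < aF c1 σ0 Φ * bF c2 σ1 Φ ∧
        (∀ i : Fin 4,
          Matrix.det (lamI c1 c2 σ0 σ1 i Φ • (1 : Matrix (Fin 4) (Fin 4) ℝ) -
            AM c1 c2 σ0 σ1 Φ) = 0) ∧
        lam4 c1 c2 σ0 σ1 Φ < lam3 c1 c2 σ0 σ1 Φ ∧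
        lam3 c1 c2 σ0 σ1 Φ < lam2 c1 c2 σ0 σ1 Φ ∧
        lam2 c1 c2 σ0 σ1 Φ < lam1 c1 c2 σ0 σ1 Φ) ∧
      lam1 c1 c2 σ0 σ1 0 = c1 ∧ lam2 c1 c2 σ0 σ1 0 = c2 := by
  obtain ⟨κ, hκ, hmem⟩ := exists_eucNorm4_lt_subset_hyperbolicSet (σ0 := σ0) (σ1 := σ1) hc2 hc12
  have hsq : c2 ^ 2 ≤ c1 ^ 2 := pow_le_pow_left₀ hc2.le hc12.le 2
  refine ⟨κ, hκ, fun Φ hΦ => ?_, lam1_zero (hc2.trans hc12).le hsq, lam2_zero hc2.le hsq⟩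
  have h := hmem Φ hΦ
  have h21 := lam2_lt_lam1 h
  have h2 := lam2_pos h
  exact ⟨h.1, h.2.1, h.2.2, det_lamI_smul_one_sub_AM h, by simp only [lam3, lam4]; linarith,
    by simp only [lam3]; linarith, h21⟩

/-- Strict hyperbolicity: there is `κ > 0`, depending only on
`c1, c2, σ0, σ1`, such that for `|Φ| < 2κ` one has `a > b > 0`, `ab > c²`, each `λᵢ(Φ)` is a
(real) eigenvalue of `A(Φ)`, and `λ₄ < λ₃ < λ₂ < λ₁`; moreover `λ₁(0) = c1`, `λ₂(0) = c2`. -/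
theorem strict_hyperbolicity (c1 c2 σ0 σ1 : ℝ) (hc2 : 0 < c2) (hc12 : c2 < c1) (hσ1 : σ1 ≠ 0) :
    ∃ κ > (0:ℝ),
      (∀ Φ : Fin 4 → ℝ, eucNorm4 Φ < 2 * κ →
        bF c2 σ1 Φ < aF c1 σ0 Φ ∧ 0 < bF c2 σ1 Φ ∧
        cF σ1 Φ ^ 2 < aF c1 σ0 Φ * bF c2 σ1 Φ ∧
        (∀ i : Fin 4,
          Matrix.det (lamI c1 c2 σ0 σ1 i Φ • (1 : Matrix (Fin 4) (Fin 4) ℝ) -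
            AM c1 c2 σ0 σ1 Φ) = 0) ∧
        lam4 c1 c2 σ0 σ1 Φ < lam3 c1 c2 σ0 σ1 Φ ∧
        lam3 c1 c2 σ0 σ1 Φ < lam2 c1 c2 σ0 σ1 Φ ∧
        lam2 c1 c2 σ0 σ1 Φ < lam1 c1 c2 σ0 σ1 Φ) ∧
      lam1 c1 c2 σ0 σ1 0 = c1 ∧ lam2 c1 c2 σ0 σ1 0 = c2 :=
  strict_hyperbolicity_general c1 c2 σ0 σ1 hc2 hc12

end ElasticIP
end
end

section
/- There exists κ > 0, depending only on c1, c2, σ0, σ1, such that for |Φ| < 2κ the eigenvalues are differentiable in Φ with gradients ∇λ1 = −∇λ4 = ( ((σ0+σ1)√Δ + (a−b)(σ0−σ1)) / (2λ1√Δ), 4σ1²φ2 / (λ1√Δ), 0, 0 ) and ∇λ2 = −∇λ3 = ( ((σ0+σ1)√Δ − (a−b)(σ0−σ1)) / (2λ2√Δ), −4σ1²φ2 / (λ2√Δ), 0, 0 ). -/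
noncomputable section

open Real Matrix Set

namespace ElasticIP

/-! Where `b < a`, `0 < b` and `c² < ab`, the discriminant `Δ ≥ (a - b)²` is positive and both
radicands `(a + b ± √Δ)/2` are positive (`√Δ < a + b` is equivalent to `c² < ab`), so `λ₁` and `λ₂`
are square roots of nonvanishing smooth functions and the chain rule gives their gradients;
`λ₃ = -λ₂` and `λ₄ = -λ₁`. The three inequalities hold at `Φ = 0` because `c₂ < c₁`, hence on a
ball around `0` by continuity. -/

def linearForm01 (α β : ℝ) : (Fin 4 → ℝ) →L[ℝ] ℝ :=
  α • ContinuousLinearMap.proj 0 + β • ContinuousLinearMap.proj 1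

@[simp]
lemma linearForm01_apply (α β : ℝ) (v : Fin 4 → ℝ) :
    linearForm01 α β v = α * v 0 + β * v 1 := rfl

lemma linearForm01_apply_single (α β : ℝ) (j : Fin 4) :
    linearForm01 α β (Pi.single j 1) = ![α, β, 0, 0] j := by
  fin_cases j <;> simp

section

variable {c1 c2 σ0 σ1 : ℝ} {Φ : Fin 4 → ℝ}

lemma hasFDerivAt_ΔF :
    HasFDerivAt (ΔF c1 c2 σ0 σ1)
      (linearForm01 (4 * (σ0 - σ1) * (aF c1 σ0 Φ - bF c2 σ1 Φ)) (32 * σ1 ^ 2 * Φ 1)) Φ := by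
  have hφ (i : Fin 4) := hasFDerivAt_apply (𝕜 := ℝ) (F' := fun _ : Fin 4 => ℝ) i Φ
  have h := ((((hφ 0).const_mul (2 * (σ0 - σ1))).const_add (c1 ^ 2 - c2 ^ 2)).pow 2).add
    ((((hφ 1).const_mul (2 * σ1)).pow 2).const_mul 4)
  refine (h.congr_fderiv (ContinuousLinearMap.ext fun v => ?_)).congr_of_eventuallyEq
    (Filter.Eventually.of_forall fun Ψ => ?_)
  · simp only [nsmul_eq_mul, _root_.add_apply, _root_.smul_apply, ContinuousLinearMap.proj_apply,
      smul_eq_mul, aF, bF, linearForm01_apply]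
    ring
  · simp only [ΔF, aF, bF, cF, Pi.add_apply]
    ring

lemma hasFDerivAt_sqrt_ΔF (hΔ : 0 < ΔF c1 c2 σ0 σ1 Φ) :
    HasFDerivAt (fun Ψ => √(ΔF c1 c2 σ0 σ1 Ψ))
      (linearForm01 (2 * (σ0 - σ1) * (aF c1 σ0 Φ - bF c2 σ1 Φ) / √(ΔF c1 c2 σ0 σ1 Φ))
        (16 * σ1 ^ 2 * Φ 1 / √(ΔF c1 c2 σ0 σ1 Φ))) Φ := by
  refine (hasFDerivAt_ΔF.sqrt hΔ.ne').congr_fderiv (ContinuousLinearMap.ext fun v => ?_)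
  simp only [_root_.smul_apply, linearForm01_apply, smul_eq_mul]
  field_simp
  ring

variable (c1 c2 σ0 σ1 Φ) in
lemma hasFDerivAt_aF_add_bF :
    HasFDerivAt (fun Ψ => aF c1 σ0 Ψ + bF c2 σ1 Ψ) (linearForm01 (2 * (σ0 + σ1)) 0) Φ := by
  have h := ((hasFDerivAt_apply (𝕜 := ℝ) (F' := fun _ : Fin 4 => ℝ) 0 Φ).const_mul
    (2 * (σ0 + σ1))).const_add (c1 ^ 2 + c2 ^ 2)
  refine (h.congr_fderiv (ContinuousLinearMap.ext fun v => ?_)).congr_of_eventuallyEq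
    (Filter.Eventually.of_forall fun Ψ => ?_)
  · simp only [_root_.smul_apply, ContinuousLinearMap.proj_apply, smul_eq_mul, linearForm01_apply,
      zero_mul, add_zero]
  · simp only [aF, bF]
    ring

lemma hasFDerivAt_lam1 (hΔ : 0 < ΔF c1 c2 σ0 σ1 Φ) (hlam : lam1 c1 c2 σ0 σ1 Φ ≠ 0) :
    HasFDerivAt (lam1 c1 c2 σ0 σ1)
      (linearForm01
        (((σ0 + σ1) * √(ΔF c1 c2 σ0 σ1 Φ) + (aF c1 σ0 Φ - bF c2 σ1 Φ) * (σ0 - σ1)) /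
          (2 * lam1 c1 c2 σ0 σ1 Φ * √(ΔF c1 c2 σ0 σ1 Φ)))
        (4 * σ1 ^ 2 * Φ 1 / (lam1 c1 c2 σ0 σ1 Φ * √(ΔF c1 c2 σ0 σ1 Φ)))) Φ := by
  have hg := ((hasFDerivAt_aF_add_bF c1 c2 σ0 σ1 Φ).add (hasFDerivAt_sqrt_ΔF hΔ)).mul_const (2⁻¹ : ℝ)
  refine (hg.sqrt (Real.sqrt_ne_zero'.mp hlam).ne').congr_fderiv
    (ContinuousLinearMap.ext fun v => ?_)
  have hs : √(ΔF c1 c2 σ0 σ1 Φ) ≠ 0 := (Real.sqrt_pos.mpr hΔ).ne'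
  change 1 / (2 * lam1 c1 c2 σ0 σ1 Φ) * ((2⁻¹ : ℝ) • (linearForm01 _ _ + linearForm01 _ _)) v = _
  simp only [_root_.smul_apply, _root_.add_apply, linearForm01_apply, smul_eq_mul]
  field_simp
  ring

lemma hasFDerivAt_lam2 (hΔ : 0 < ΔF c1 c2 σ0 σ1 Φ) (hlam : lam2 c1 c2 σ0 σ1 Φ ≠ 0) :
    HasFDerivAt (lam2 c1 c2 σ0 σ1)
      (linearForm01
        (((σ0 + σ1) * √(ΔF c1 c2 σ0 σ1 Φ) - (aF c1 σ0 Φ - bF c2 σ1 Φ) * (σ0 - σ1)) /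
          (2 * lam2 c1 c2 σ0 σ1 Φ * √(ΔF c1 c2 σ0 σ1 Φ)))
        (-(4 * σ1 ^ 2 * Φ 1) / (lam2 c1 c2 σ0 σ1 Φ * √(ΔF c1 c2 σ0 σ1 Φ)))) Φ := by
  have hg := ((hasFDerivAt_aF_add_bF c1 c2 σ0 σ1 Φ).sub (hasFDerivAt_sqrt_ΔF hΔ)).mul_const (2⁻¹ : ℝ)
  refine (hg.sqrt (Real.sqrt_ne_zero'.mp hlam).ne').congr_fderiv
    (ContinuousLinearMap.ext fun v => ?_)
  have hs : √(ΔF c1 c2 σ0 σ1 Φ) ≠ 0 := (Real.sqrt_pos.mpr hΔ).ne'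
  change 1 / (2 * lam2 c1 c2 σ0 σ1 Φ) * ((2⁻¹ : ℝ) • (linearForm01 _ _ - linearForm01 _ _)) v = _
  simp only [_root_.smul_apply, _root_.sub_apply, linearForm01_apply, smul_eq_mul]
  field_simp
  ring

lemma exists_eucNorm4_lt_separated (hc2 : 0 < c2) (hc12 : c2 < c1) :
    ∃ ε > (0 : ℝ), ∀ Φ, eucNorm4 Φ < ε →
      bF c2 σ1 Φ < aF c1 σ0 Φ ∧ 0 < bF c2 σ1 Φ ∧ cF σ1 Φ ^ 2 < aF c1 σ0 Φ * bF c2 σ1 Φ := by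
  have hcont : Continuous (aF c1 σ0) ∧ Continuous (bF c2 σ1) ∧ Continuous (cF σ1) :=
    ⟨by unfold aF; fun_prop, by unfold bF; fun_prop, by unfold cF; fun_prop⟩
  have hsep : ∀ᶠ Φ in nhds 0,
      bF c2 σ1 Φ < aF c1 σ0 Φ ∧ 0 < bF c2 σ1 Φ ∧ cF σ1 Φ ^ 2 < aF c1 σ0 Φ * bF c2 σ1 Φ := by
    obtain ⟨ha, hb, hc⟩ := hcont
    refine (hb.continuousAt.eventually_lt ha.continuousAt ?_).and
      ((continuousAt_const.eventually_lt hb.continuousAt ?_).and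
        ((hc.pow 2).continuousAt.eventually_lt (ha.mul hb).continuousAt ?_))
    all_goals simp only [aF, bF, cF, Pi.pow_apply, Pi.zero_apply, mul_zero, add_zero,
      zero_pow two_ne_zero]
    · exact pow_lt_pow_left₀ hc12 hc2.le two_ne_zero
    · exact pow_pos hc2 2
    · exact mul_pos (pow_pos (hc2.trans hc12) 2) (pow_pos hc2 2)
  obtain ⟨ε, hε, hball⟩ := Metric.eventually_nhds_iff.1 hsep
  refine ⟨ε, hε, fun Φ hΦ => hball ?_⟩
  rw [dist_zero_right]
  linarith [norm_le_eucNorm4 Φ]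

lemma ΔF_pos (hab : bF c2 σ1 Φ < aF c1 σ0 Φ) : 0 < ΔF c1 c2 σ0 σ1 Φ :=
  add_pos_of_pos_of_nonneg (pow_pos (sub_pos.2 hab) 2) (by positivity)

lemma lam1_pos (hab : bF c2 σ1 Φ < aF c1 σ0 Φ) (hb : 0 < bF c2 σ1 Φ) :
    0 < lam1 c1 c2 σ0 σ1 Φ :=
  Real.sqrt_pos.2 (by linarith [Real.sqrt_nonneg (ΔF c1 c2 σ0 σ1 Φ)])

lemma lam2_pos_s6 (hab : bF c2 σ1 Φ < aF c1 σ0 Φ) (hb : 0 < bF c2 σ1 Φ)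
    (hc : cF σ1 Φ ^ 2 < aF c1 σ0 Φ * bF c2 σ1 Φ) : 0 < lam2 c1 c2 σ0 σ1 Φ := by
  have hlt : √(ΔF c1 c2 σ0 σ1 Φ) < aF c1 σ0 Φ + bF c2 σ1 Φ := by
    rw [Real.sqrt_lt' (by linarith), ΔF]
    nlinarith
  exact Real.sqrt_pos.2 (by linarith)

end

theorem eigenvalue_gradients_general (c1 c2 σ0 σ1 : ℝ) (hc2 : 0 < c2) (hc12 : c2 < c1) :
    ∃ κ > (0:ℝ), ∀ Φ : Fin 4 → ℝ, eucNorm4 Φ < 2 * κ →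
      DifferentiableAt ℝ (lam1 c1 c2 σ0 σ1) Φ ∧
      DifferentiableAt ℝ (lam2 c1 c2 σ0 σ1) Φ ∧
      DifferentiableAt ℝ (lam3 c1 c2 σ0 σ1) Φ ∧
      DifferentiableAt ℝ (lam4 c1 c2 σ0 σ1) Φ ∧
      (∀ j : Fin 4,
        fderiv ℝ (lam1 c1 c2 σ0 σ1) Φ (Pi.single j 1) =
          ![((σ0 + σ1) * Real.sqrt (ΔF c1 c2 σ0 σ1 Φ) +
                (aF c1 σ0 Φ - bF c2 σ1 Φ) * (σ0 - σ1)) /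
              (2 * lam1 c1 c2 σ0 σ1 Φ * Real.sqrt (ΔF c1 c2 σ0 σ1 Φ)),
            4 * σ1 ^ 2 * Φ 1 / (lam1 c1 c2 σ0 σ1 Φ * Real.sqrt (ΔF c1 c2 σ0 σ1 Φ)),
            0, 0] j ∧
        fderiv ℝ (lam4 c1 c2 σ0 σ1) Φ (Pi.single j 1) =
          -(fderiv ℝ (lam1 c1 c2 σ0 σ1) Φ (Pi.single j 1)) ∧
        fderiv ℝ (lam2 c1 c2 σ0 σ1) Φ (Pi.single j 1) =
          ![((σ0 + σ1) * Real.sqrt (ΔF c1 c2 σ0 σ1 Φ) -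
                (aF c1 σ0 Φ - bF c2 σ1 Φ) * (σ0 - σ1)) /
              (2 * lam2 c1 c2 σ0 σ1 Φ * Real.sqrt (ΔF c1 c2 σ0 σ1 Φ)),
            -(4 * σ1 ^ 2 * Φ 1) / (lam2 c1 c2 σ0 σ1 Φ * Real.sqrt (ΔF c1 c2 σ0 σ1 Φ)),
            0, 0] j ∧
        fderiv ℝ (lam3 c1 c2 σ0 σ1) Φ (Pi.single j 1) =
          -(fderiv ℝ (lam2 c1 c2 σ0 σ1) Φ (Pi.single j 1))) := by
  obtain ⟨ε, hε, hsep⟩ := exists_eucNorm4_lt_separated (σ0 := σ0) (σ1 := σ1) hc2 hc12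
  refine ⟨ε / 2, half_pos hε, fun Φ hΦ => ?_⟩
  obtain ⟨hab, hb, hc⟩ := hsep Φ (by linarith)
  have h1 := hasFDerivAt_lam1 (ΔF_pos hab) (lam1_pos hab hb).ne'
  have h2 := hasFDerivAt_lam2 (ΔF_pos hab) (lam2_pos_s6 hab hb hc).ne'
  have h3 : HasFDerivAt (lam3 c1 c2 σ0 σ1) _ Φ := h2.neg
  have h4 : HasFDerivAt (lam4 c1 c2 σ0 σ1) _ Φ := h1.neg
  refine ⟨h1.differentiableAt, h2.differentiableAt, h3.differentiableAt, h4.differentiableAt,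
    fun j => ?_⟩
  simp only [h1.fderiv, h2.fderiv, h3.fderiv, h4.fderiv, _root_.neg_apply,
    linearForm01_apply_single, and_self]

/-- Gradients of the eigenvalues: for `|Φ| < 2κ` the maps `λᵢ` are
differentiable at `Φ`, with
`∇λ₁ = -∇λ₄ = (((σ0+σ1)√Δ + (a-b)(σ0-σ1))/(2λ₁√Δ), 4σ₁²φ₂/(λ₁√Δ), 0, 0)` and
`∇λ₂ = -∇λ₃ = (((σ0+σ1)√Δ - (a-b)(σ0-σ1))/(2λ₂√Δ), -4σ₁²φ₂/(λ₂√Δ), 0, 0)`. -/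
theorem eigenvalue_gradients (c1 c2 σ0 σ1 : ℝ) (hc2 : 0 < c2) (hc12 : c2 < c1) (hσ1 : σ1 ≠ 0) :
    ∃ κ > (0:ℝ), ∀ Φ : Fin 4 → ℝ, eucNorm4 Φ < 2 * κ →
      DifferentiableAt ℝ (lam1 c1 c2 σ0 σ1) Φ ∧
      DifferentiableAt ℝ (lam2 c1 c2 σ0 σ1) Φ ∧
      DifferentiableAt ℝ (lam3 c1 c2 σ0 σ1) Φ ∧
      DifferentiableAt ℝ (lam4 c1 c2 σ0 σ1) Φ ∧
      (∀ j : Fin 4,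
        fderiv ℝ (lam1 c1 c2 σ0 σ1) Φ (Pi.single j 1) =
          ![((σ0 + σ1) * Real.sqrt (ΔF c1 c2 σ0 σ1 Φ) +
                (aF c1 σ0 Φ - bF c2 σ1 Φ) * (σ0 - σ1)) /
              (2 * lam1 c1 c2 σ0 σ1 Φ * Real.sqrt (ΔF c1 c2 σ0 σ1 Φ)),
            4 * σ1 ^ 2 * Φ 1 / (lam1 c1 c2 σ0 σ1 Φ * Real.sqrt (ΔF c1 c2 σ0 σ1 Φ)),
            0, 0] j ∧
        fderiv ℝ (lam4 c1 c2 σ0 σ1) Φ (Pi.single j 1) =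
          -(fderiv ℝ (lam1 c1 c2 σ0 σ1) Φ (Pi.single j 1)) ∧
        fderiv ℝ (lam2 c1 c2 σ0 σ1) Φ (Pi.single j 1) =
          ![((σ0 + σ1) * Real.sqrt (ΔF c1 c2 σ0 σ1 Φ) -
                (aF c1 σ0 Φ - bF c2 σ1 Φ) * (σ0 - σ1)) /
              (2 * lam2 c1 c2 σ0 σ1 Φ * Real.sqrt (ΔF c1 c2 σ0 σ1 Φ)),
            -(4 * σ1 ^ 2 * Φ 1) / (lam2 c1 c2 σ0 σ1 Φ * Real.sqrt (ΔF c1 c2 σ0 σ1 Φ)),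
            0, 0] j ∧
        fderiv ℝ (lam3 c1 c2 σ0 σ1) Φ (Pi.single j 1) =
          -(fderiv ℝ (lam2 c1 c2 σ0 σ1) Φ (Pi.single j 1))) :=
  eigenvalue_gradients_general c1 c2 σ0 σ1 hc2 hc12

end ElasticIP
end
end

section
/- There exists a constant C > 0, depending only on α, δ, χ, ψ (and not on η or θ), such that for all η ∈ (0, 1/4] and all ξ ∈ ℝ², the Fourier transform of w_η satisfies the pointwise bound |𝓕w_η(ξ)| ≤ C θ η^{3/2} |ln η|^{α−δ}. -/
noncomputable section

open Real Set MeasureTheory Filter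
open scoped FourierTransform Topology

namespace ElasticIP

/-- The low-regularity initial datum
`w_η(x, x₂) = θ |ln x|^α χ(x/η) ψ(|ln x|^δ x₂/√x)` for `x > 0`, extended by `0` for `x ≤ 0`,
regarded as a function on the Euclidean plane. -/
def wdata (θ α δ : ℝ) (χ ψ : ℝ → ℝ) (η : ℝ) (p : EuclideanSpace ℝ (Fin 2)) : ℝ :=
  if 0 < p 0 then
    θ * |Real.log (p 0)| ^ α * χ (p 0 / η) *
      ψ (|Real.log (p 0)| ^ δ * p 1 / Real.sqrt (p 0))
  else 0

/-- Uniform pointwise bound for the Fourier transform of the datum: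
`|𝓕w_η(ξ)| ≤ C θ η^{3/2} |ln η|^{α-δ}` for all `ξ`, with `C = C(α, δ, χ, ψ)` independent of
`η ∈ (0, 1/4]` and of `θ`. -/
theorem data_fourier_pointwise_bound (α δ : ℝ) (hα0 : 0 < α) (hα : α < 1/2) (hδ : 0 < δ)
    (χ ψ : ℝ → ℝ)
    (hχ : ContDiff ℝ (⊤ : ℕ∞) χ) (hχc : HasCompactSupport χ)
    (hχ01 : ∀ x, 0 ≤ χ x ∧ χ x ≤ 1)
    (hχ1 : ∀ x ∈ Icc (6/5 : ℝ) (9/5), χ x = 1)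
    (hχ0 : ∀ x ∉ Icc (1 : ℝ) 2, χ x = 0)
    (hψ : ContDiff ℝ (⊤ : ℕ∞) ψ) (hψc : HasCompactSupport ψ)
    (hψ01 : ∀ x, 0 ≤ ψ x ∧ ψ x ≤ 1)
    (hψ1 : ∀ x ∈ Icc (-(1/4) : ℝ) (1/4), ψ x = 1)
    (hψ0 : ∀ x ∉ Icc (-(1/2) : ℝ) (1/2), ψ x = 0) :
    ∃ C > (0:ℝ), ∀ θ > (0:ℝ), ∀ η ∈ Ioc (0:ℝ) (1/4), ∀ ξ : EuclideanSpace ℝ (Fin 2),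
      ‖𝓕 (fun p => (wdata θ α δ χ ψ η p : ℂ)) ξ‖ ≤
        C * θ * η ^ ((3:ℝ)/2) * |Real.log η| ^ (α - δ) := by
  refine ⟨2 * 2 ^ δ * Real.sqrt 2, by positivity, ?_⟩
  intro θ hθ η hη ξ
  obtain ⟨hη0, hη4⟩ := hη
  -- basic facts about logarithms
  set L : ℝ := |Real.log η| with hLdef
  have hηlt1 : η < 1 := lt_of_le_of_lt hη4 (by norm_num)
  have hlogη_neg : Real.log η < 0 := Real.log_neg hη0 hηlt1
  have hL : L = -Real.log η := abs_of_neg hlogη_neg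
  have hLln4 : Real.log 4 ≤ L := by
    rw [hL]
    have := Real.log_le_log hη0 hη4
    have h4 : Real.log (1/4 : ℝ) = -Real.log 4 := by
      rw [one_div, Real.log_inv]
    linarith [Real.log_le_log hη0 hη4, h4 ▸ Real.log_le_log hη0 hη4]
  have hln2pos : (0:ℝ) < Real.log 2 := Real.log_pos (by norm_num)
  have hln4 : Real.log 4 = 2 * Real.log 2 := by
    rw [show (4:ℝ) = 2^2 by norm_num, Real.log_pow]; push_cast; ring
  have hLpos : 0 < L := lt_of_lt_of_le (by rw [hln4]; linarith) hLln4
  have hln2L : Real.log 2 ≤ L / 2 := by rw [hln4] at hLln4; linarith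
  -- the box containing the support
  set K : ℝ := 2 ^ δ * L ^ (-δ) with hKdef
  have hKpos : 0 < K := by positivity
  set R : ℝ := Real.sqrt (2 * η) * K with hRdef
  have hRpos : 0 < R := by
    have : (0:ℝ) < Real.sqrt (2 * η) := Real.sqrt_pos.2 (by linarith)
    positivity
  set S : Set (EuclideanSpace ℝ (Fin 2)) :=
    {p | p 0 ∈ Icc η (2*η) ∧ p 1 ∈ Icc (-R) R} with hSdef
  have hSmeas : MeasurableSet S := by
    have h0 : Measurable (fun p : EuclideanSpace ℝ (Fin 2) => p 0) := (measurable_pi_apply 0).comp (WithLp.measurable_ofLp 2 _)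
    have h1 : Measurable (fun p : EuclideanSpace ℝ (Fin 2) => p 1) := (measurable_pi_apply 1).comp (WithLp.measurable_ofLp 2 _)
    exact (h0 measurableSet_Icc).inter (h1 measurableSet_Icc)
  have hSvol : volume S = ENNReal.ofReal η * ENNReal.ofReal (2*R) := by
    have h : S = (MeasurableEquiv.toLp 2 (Fin 2 → ℝ)).symm ⁻¹'
        (univ.pi fun i => if i = 0 then Icc η (2*η) else Icc (-R) R) := by
      rw [hSdef]
      ext p
      simp [Set.mem_pi, Fin.forall_fin_two, MeasurableEquiv.coe_toLp_symm]
    have hm : ∀ i : Fin 2, MeasurableSet (if i = 0 then Icc η (2*η) else Icc (-R) R) := by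
      intro i
      by_cases hi : i = 0 <;> simp [hi]
    rw [h, (EuclideanSpace.volume_preserving_symm_measurableEquiv_toLp (Fin 2)).measure_preimage
      ((MeasurableSet.univ_pi hm).nullMeasurableSet),
      volume_pi_pi, Fin.prod_univ_two]
    simp [Real.volume_Icc]
    congr 1 <;> ring_nf
    rw [ENNReal.ofReal_mul' (by norm_num), ENNReal.ofReal_ofNat]
  -- the key bound on |ln x| for x in [η, 2η]
  have hlogx : ∀ x : ℝ, η ≤ x → x ≤ 2*η → L/2 ≤ |Real.log x| ∧ |Real.log x| ≤ L := by
    intro x hx1 hx2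
    have hx0 : 0 < x := lt_of_lt_of_le hη0 hx1
    have hxlt1 : x < 1 := by nlinarith
    have hlx : Real.log x < 0 := Real.log_neg hx0 hxlt1
    rw [abs_of_neg hlx]
    constructor
    · have h1 : Real.log x ≤ Real.log (2*η) := Real.log_le_log hx0 hx2
      have h2 : Real.log (2*η) = Real.log 2 + Real.log η := Real.log_mul (by norm_num) (ne_of_gt hη0)
      rw [hL]; linarith
    · have := Real.log_le_log hη0 hx1
      rw [hL]; linarith
  -- wdata vanishes off S
  have hzero : ∀ p : EuclideanSpace ℝ (Fin 2), p ∉ S → wdata θ α δ χ ψ η p = 0 := by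
    intro p hp
    unfold wdata
    by_cases h0 : 0 < p 0
    · rw [if_pos h0]
      by_cases hx : p 0 ∈ Icc η (2*η)
      · -- then p 1 ∉ Icc (-R) R
        have hx2 : p 1 ∉ Icc (-R) R := fun h => hp ⟨hx, h⟩
        have habs : R < |p 1| := by
          by_contra h
          push_neg at h
          exact hx2 (abs_le.1 h)
        have hψz : ψ (|Real.log (p 0)| ^ δ * p 1 / Real.sqrt (p 0)) = 0 := by
          apply hψ0
          intro hmem
          obtain ⟨hm1, hm2⟩ := hmem
          have hargle : abs (|Real.log (p 0)| ^ δ * p 1 / Real.sqrt (p 0)) ≤ 1/2 := abs_le.2 ⟨hm1, hm2⟩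
          have hs0 : 0 < Real.sqrt (p 0) := Real.sqrt_pos.2 h0
          have hargeq : abs (|Real.log (p 0)| ^ δ * p 1 / Real.sqrt (p 0))
              = |Real.log (p 0)| ^ δ * |p 1| / Real.sqrt (p 0) := by
            rw [abs_div, abs_mul, abs_of_nonneg (Real.rpow_nonneg (abs_nonneg _) δ),
              abs_of_nonneg hs0.le]
          obtain ⟨hlx1, _⟩ := hlogx (p 0) hx.1 hx.2
          -- (L/2)^δ * K = 1
          have hkey : (L/2) ^ δ * K = 1 := by
            have e1 : ((L/2)*2 : ℝ) = L := by ring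
            rw [hKdef, ← mul_assoc,
              ← Real.mul_rpow (by positivity) (by norm_num : (0:ℝ) ≤ 2), e1,
              ← Real.rpow_add hLpos]
            simp
          have hsle : Real.sqrt (p 0) ≤ Real.sqrt (2*η) := Real.sqrt_le_sqrt hx.2
          have hs2 : (0:ℝ) < Real.sqrt (2*η) := Real.sqrt_pos.2 (by linarith)
          have hnum : (L/2) ^ δ * R ≤ |Real.log (p 0)| ^ δ * |p 1| := by
            apply mul_le_mul (Real.rpow_le_rpow (by positivity) hlx1 hδ.le) habs.le hRpos.le
              (Real.rpow_nonneg (abs_nonneg _) δ)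
          have h1le : (1:ℝ) ≤ |Real.log (p 0)| ^ δ * |p 1| / Real.sqrt (p 0) := by
            have : (L/2) ^ δ * R / Real.sqrt (2*η) ≤
                |Real.log (p 0)| ^ δ * |p 1| / Real.sqrt (p 0) :=
              div_le_div₀ (by positivity) hnum hs0 hsle
            have heq : (L/2) ^ δ * R / Real.sqrt (2*η) = 1 := by
              rw [hRdef, mul_comm (Real.sqrt (2*η)) K, ← mul_assoc, mul_div_assoc,
                div_self hs2.ne', mul_one, hkey]
            linarith
          rw [hargeq] at hargle
          linarith
        rw [hψz, mul_zero]
      · have hχz : χ (p 0 / η) = 0 := by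
          apply hχ0
          intro hmem
          obtain ⟨hm1, hm2⟩ := hmem
          apply hx
          constructor
          · have := (le_div_iff₀ hη0).1 hm1; linarith
          · have := (div_le_iff₀ hη0).1 hm2; linarith
        rw [hχz, mul_zero, zero_mul]
    · rw [if_neg h0]
  -- bound on S
  set M : ℝ := θ * L ^ α with hMdef
  have hMpos : 0 < M := by positivity
  have hbound : ∀ p : EuclideanSpace ℝ (Fin 2),
      ‖(wdata θ α δ χ ψ η p : ℂ)‖ ≤ S.indicator (fun _ => M) p := by
    intro p
    rw [Complex.norm_real, Real.norm_eq_abs]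
    by_cases hp : p ∈ S
    · rw [indicator_of_mem hp]
      obtain ⟨hx, _⟩ := hp
      unfold wdata
      have h0 : 0 < p 0 := lt_of_lt_of_le hη0 hx.1
      rw [if_pos h0]
      obtain ⟨_, hlx2⟩ := hlogx (p 0) hx.1 hx.2
      have hw_nonneg : 0 ≤ θ * |Real.log (p 0)| ^ α * χ (p 0 / η) *
          ψ (|Real.log (p 0)| ^ δ * p 1 / Real.sqrt (p 0)) := by
        have := (hχ01 (p 0 / η)).1
        have := (hψ01 (|Real.log (p 0)| ^ δ * p 1 / Real.sqrt (p 0))).1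
        positivity
      rw [abs_of_nonneg hw_nonneg, hMdef]
      have h1 : |Real.log (p 0)| ^ α ≤ L ^ α :=
        Real.rpow_le_rpow (abs_nonneg _) hlx2 hα0.le
      calc θ * |Real.log (p 0)| ^ α * χ (p 0 / η) *
            ψ (|Real.log (p 0)| ^ δ * p 1 / Real.sqrt (p 0))
          ≤ θ * |Real.log (p 0)| ^ α * 1 * 1 := by
            apply mul_le_mul _ (hψ01 _).2 (hψ01 _).1 (by positivity)
            apply mul_le_mul_of_nonneg_left (hχ01 _).2 (by positivity)
        _ ≤ θ * L ^ α := by rw [mul_one, mul_one]; exact mul_le_mul_of_nonneg_left h1 hθ.le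
    · rw [indicator_of_notMem hp, hzero p hp]
      simp
  -- integrate
  have hSfin : volume S < ⊤ := by
    rw [hSvol]; exact ENNReal.mul_lt_top ENNReal.ofReal_lt_top ENNReal.ofReal_lt_top
  have hint : Integrable (S.indicator (fun _ => M)) volume := by
    rw [integrable_indicator_iff hSmeas]
    exact integrableOn_const hSfin.ne
  have step1 : ‖𝓕 (fun p => (wdata θ α δ χ ψ η p : ℂ)) ξ‖ ≤
      ∫ p, ‖(wdata θ α δ χ ψ η p : ℂ)‖ :=
    VectorFourier.norm_fourierIntegral_le_integral_norm _ _ _ _ _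
  have step2 : ∫ p, ‖(wdata θ α δ χ ψ η p : ℂ)‖ ≤ ∫ p, S.indicator (fun _ => M) p :=
    integral_mono_of_nonneg (Filter.Eventually.of_forall fun p => norm_nonneg _) hint
      (Filter.Eventually.of_forall hbound)
  have step3 : ∫ p, S.indicator (fun _ => M) p = (volume S).toReal * M := by
    rw [integral_indicator_const _ hSmeas, smul_eq_mul]; rfl
  have hvolR : (volume S).toReal = η * (2*R) := by
    rw [hSvol, ENNReal.toReal_mul, ENNReal.toReal_ofReal hη0.le,
      ENNReal.toReal_ofReal (by positivity)]
  -- final arithmetic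
  have hfinal : (volume S).toReal * M = 2 * 2 ^ δ * Real.sqrt 2 * θ * η ^ ((3:ℝ)/2) * L ^ (α - δ) := by
    rw [hvolR, hMdef, hRdef, hKdef]
    have h1 : Real.sqrt (2*η) = Real.sqrt 2 * Real.sqrt η := Real.sqrt_mul (by norm_num) η
    have h2 : Real.sqrt η = η ^ ((1:ℝ)/2) := Real.sqrt_eq_rpow η
    have h3 : η ^ ((3:ℝ)/2) = η * η ^ ((1:ℝ)/2) := by
      rw [show (3:ℝ)/2 = 1 + 1/2 by norm_num, Real.rpow_add hη0, Real.rpow_one]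
    have h4 : L ^ (α - δ) = L ^ α * L ^ (-δ) := by
      rw [show α - δ = α + -δ by ring, Real.rpow_add hLpos]
    rw [h1, h2, h3, h4]
    ring
  calc ‖𝓕 (fun p => (wdata θ α δ χ ψ η p : ℂ)) ξ‖
      ≤ ∫ p, S.indicator (fun _ => M) p := step1.trans step2
    _ = 2 * 2 ^ δ * Real.sqrt 2 * θ * η ^ ((3:ℝ)/2) * L ^ (α - δ) := by rw [step3, hfinal]


end ElasticIP
end
end
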